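/- arXiv:2402.00696 — 4 statements merged into one kernel-verified Lean document; each statement's English description precedes it below -/
import Mathlib

section
/- Let $G$ be a directed acyclic graph on vertices $\{1,\dots,K\}$ that is a rooted forest (each vertex has at most one parent), let $\Sigma_K$ be the set of permutations $\sigma$ of $\{1,\dots,K\}$ that are topological orders (i.e., every vertex appears after all vertices of the subtree rooted at it, equivalently for every edge from $i$ to $j$, vertex $j$ appears before $i$), and for each vertex $k$ let $V_k$ denote the vertex set of the subtree rooted at $k$. Then for positive reals $c_1,\dots,c_K$: $\sum_{\sigma \in \Sigma_K} \prod_{k=1}^{K} \left( \sum_{j=1}^{k} c_{\sigma(j)} \right)^{-1} = \prod_{k=1}^{K} \left( \sum_{j \in V_k} c_j \right)^{-1}$. -/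
/-!
Induct over child-closed vertex sets `s`. The last vertex `r` of a topological order of `s` is a
root of `s` (its parent lies outside `s`), removing it leaves a topological order of `s \ {r}`,
and the last prefix sum is all of `∑_{j ∈ s} c_j`. Hence the left side `L(s)` satisfies
`L(s) = (∑_{j ∈ s} c_j)⁻¹ ∑_{r root} L(s \ {r})`. The right side satisfies the same recursion,
because the subtrees of the roots of `s` partition `s`.
-/

open Finset Relation
open scoped Classical

namespace ForestPartialFraction

variable {α : Type*} (par : α → Option α)

def IsChild (a b : α) : Prop := par a = some b

noncomputable def subtree [Fintype α] (k : α) : Finset α :=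
  {j | ReflTransGen (IsChild par) j k}

noncomputable def roots (s : Finset α) : Finset α := {r ∈ s | ∀ b ∈ s, par r ≠ some b}

def ChildClosed (s : Finset α) : Prop := ∀ a b, par a = some b → b ∈ s → a ∈ s

noncomputable def topoOrders [Fintype α] (n : ℕ) (s : Finset α) : Finset (Fin n → α) :=
  {f | Function.Injective f ∧ Set.range f = s ∧ ∀ i j, par (f i) = some (f j) → i < j}

def prefixWeight {𝕜 : Type*} [Field 𝕜] (c : α → 𝕜) {n : ℕ} (f : Fin n → α) : 𝕜 :=
  ∏ k, (∑ j ∈ Iic k, c (f j))⁻¹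

variable {par}

section Forest

variable {s : Finset α}

theorem mem_roots {r : α} : r ∈ roots par s ↔ r ∈ s ∧ ∀ b ∈ s, par r ≠ some b := mem_filter

theorem ChildClosed.mem_of_reflTransGen (hs : ChildClosed par s) {j k : α} (hk : k ∈ s)
    (h : ReflTransGen (IsChild par) j k) : j ∈ s := by
  induction h using ReflTransGen.head_induction_on with
  | refl => exact hk
  | head hab _ ih => exact hs _ _ hab ih

theorem ChildClosed.erase_root (hs : ChildClosed par s) {r : α} (hr : r ∈ roots par s) :
    ChildClosed par (s.erase r) := by
  intro a b hab hb
  obtain ⟨-, hbs⟩ := mem_erase.mp hb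
  refine mem_erase.mpr ⟨?_, hs a b hab hbs⟩
  rintro rfl
  exact (mem_roots.mp hr).2 b hbs hab

theorem not_reflTransGen_of_mem_roots (hs : ChildClosed par s) {r k : α}
    (hr : r ∈ roots par s) (hk : k ∈ s) (hne : r ≠ k) : ¬ ReflTransGen (IsChild par) r k := by
  intro h
  obtain ⟨b, hrb, hbk⟩ := (ReflTransGen.cases_head h).resolve_left hne
  exact (mem_roots.mp hr).2 b (hs.mem_of_reflTransGen hk hbk) hrb

theorem exists_mem_roots_reflTransGen [Finite α]
    (hacyclic : ∀ k, ¬ TransGen (IsChild par) k k) {j : α} (hj : j ∈ s) :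
    ∃ r ∈ roots par s, ReflTransGen (IsChild par) j r := by
  have : IsTrans α (flip (TransGen (IsChild par))) := ⟨fun _ _ _ h₁ h₂ => h₂.trans h₁⟩
  have : Std.Irrefl (flip (TransGen (IsChild par))) := ⟨hacyclic⟩
  have hwf : WellFounded (flip (IsChild par)) :=
    Subrelation.wf (r := flip (TransGen (IsChild par))) (fun h => TransGen.single h)
      (Finite.wellFounded_of_trans_of_irrefl _)
  induction j using hwf.induction with
  | _ j ih =>
  by_cases hparent : ∃ b ∈ s, par j = some b
  · obtain ⟨b, hbs, hjb⟩ := hparent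
    obtain ⟨r, hr, hbr⟩ := ih b hjb hbs
    exact ⟨r, hr, hbr.head hjb⟩
  · push Not at hparent
    exact ⟨j, mem_roots.mpr ⟨hj, hparent⟩, ReflTransGen.refl⟩

theorem sum_roots_sum_subtree [Fintype α] {M : Type*} [AddCommMonoid M]
    (hacyclic : ∀ k, ¬ TransGen (IsChild par) k k) (hs : ChildClosed par s) (c : α → M) :
    ∑ r ∈ roots par s, ∑ j ∈ subtree par r, c j = ∑ j ∈ s, c j := by
  have hdisj : (roots par s : Set α).PairwiseDisjoint (subtree par) := by
    intro r hr r' hr' hne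
    refine disjoint_left.mpr fun j hjr hjr' => ?_
    have hrs := (mem_roots.mp hr).1
    have hrs' := (mem_roots.mp hr').1
    have hunique : Relator.RightUnique (IsChild par) := fun _ _ _ h₁ h₂ =>
      Option.some.inj (h₁.symm.trans h₂)
    rcases ReflTransGen.total_of_right_unique hunique (mem_filter.mp hjr).2
      (mem_filter.mp hjr').2 with h | h
    · exact not_reflTransGen_of_mem_roots hs hr hrs' hne h
    · exact not_reflTransGen_of_mem_roots hs hr' hrs hne.symm h
  have hcover : (roots par s).biUnion (subtree par) = s := by
    ext j
    simp only [mem_biUnion, subtree, mem_filter, mem_univ, true_and]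
    constructor
    · rintro ⟨r, hr, hjr⟩
      exact hs.mem_of_reflTransGen (mem_roots.mp hr).1 hjr
    · exact exists_mem_roots_reflTransGen hacyclic
  rw [← sum_biUnion hdisj, hcover]

end Forest

section Orders

variable {n : ℕ} {𝕜 : Type*} [Field 𝕜]

theorem prefixWeight_snoc (c : α → 𝕜) (g : Fin n → α) (r : α) :
    prefixWeight c (Fin.snoc g r : Fin (n + 1) → α) =
      prefixWeight c g * (∑ j, c ((Fin.snoc g r : Fin (n + 1) → α) j))⁻¹ := by
  have hlast : Iic (Fin.last n) = univ := eq_univ_of_forall fun i => mem_Iic.mpr (Fin.le_last i)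
  simp [prefixWeight, Fin.prod_univ_castSucc, Fin.sum_Iic_castSucc, hlast, mul_comm]

variable [Fintype α] {s : Finset α}

theorem mem_topoOrders {f : Fin n → α} : f ∈ topoOrders par n s ↔
    Function.Injective f ∧ Set.range f = s ∧ ∀ i j, par (f i) = some (f j) → i < j := by
  simp [topoOrders]

theorem snoc_mem_topoOrders_iff {g : Fin n → α} {r : α} :
    (Fin.snoc g r : Fin (n + 1) → α) ∈ topoOrders par (n + 1) s ↔
      r ∈ roots par s ∧ g ∈ topoOrders par n (s.erase r) := by
  simp only [mem_topoOrders, mem_roots, Fin.snoc_injective_iff,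
    Fin.range_snoc, Fin.forall_fin_succ', Fin.snoc_castSucc, Fin.snoc_last,
    Fin.castSucc_lt_castSucc_iff, Fin.castSucc_lt_last, coe_erase, lt_self_iff_false,
    imp_false, implies_true, and_true]
  constructor
  · rintro ⟨⟨hg, hr⟩, hrange, htopo, hlast, hself⟩
    have hrs : r ∈ s := by rw [← mem_coe, ← hrange]; exact Set.mem_insert _ _
    refine ⟨⟨hrs, fun b hb h => ?_⟩, hg, ?_, htopo⟩
    · rw [← mem_coe, ← hrange] at hb
      rcases hb with rfl | ⟨i, rfl⟩
      · exact hself h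
      · exact (hlast i h).not_ge (Fin.le_last _)
    · rw [← hrange, Set.insert_sdiff_self_of_notMem (by simpa using hr)]
  · rintro ⟨⟨hrs, hroot⟩, hg, hrange, htopo⟩
    have hr : r ∉ Set.range g := by simp [hrange]
    refine ⟨⟨hg, by simpa using hr⟩, ?_, htopo, fun i h => ?_, hroot r hrs⟩
    · rw [hrange, Set.insert_sdiff_self_of_mem (mem_coe.mpr hrs)]
    · refine absurd h (hroot _ ?_)
      rw [← mem_coe, ← Set.insert_sdiff_self_of_mem (mem_coe.mpr hrs), ← hrange]
      exact Set.mem_insert_of_mem _ (Set.mem_range_self i)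

theorem sum_comp_of_mem_topoOrders {M : Type*} [AddCommMonoid M] (c : α → M) {f : Fin n → α}
    (hf : f ∈ topoOrders par n s) : ∑ i, c (f i) = ∑ x ∈ s, c x := by
  obtain ⟨hinj, hrange, -⟩ := mem_topoOrders.mp hf
  have himage : univ.image f = s := coe_injective (by simpa using hrange)
  rw [← himage, sum_image fun i _ j _ h => hinj h]

theorem sum_topoOrders_succ (c : α → 𝕜) :
    ∑ f ∈ topoOrders par (n + 1) s, prefixWeight c f =
      (∑ j ∈ s, c j)⁻¹ *
        ∑ r ∈ roots par s, ∑ g ∈ topoOrders par n (s.erase r), prefixWeight c g := by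
  simp_rw [mul_sum]
  rw [sum_sigma']
  symm
  refine sum_equiv ((Equiv.sigmaEquivProd α (Fin n → α)).trans (Fin.snocEquiv fun _ => α))
    ?_ ?_
  · rintro ⟨r, g⟩
    exact mem_sigma.trans snoc_mem_topoOrders_iff.symm
  · rintro ⟨r, g⟩ hrg
    have hsnoc : (Fin.snoc g r : Fin (n + 1) → α) ∈ topoOrders par (n + 1) s :=
      snoc_mem_topoOrders_iff.mpr (mem_sigma.mp hrg)
    change _ = prefixWeight c (Fin.snoc g r : Fin (n + 1) → α)
    rw [prefixWeight_snoc, sum_comp_of_mem_topoOrders c hsnoc, mul_comm]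

theorem sum_topoOrders_zero (c : α → 𝕜) :
    ∑ f ∈ topoOrders par 0 ∅, prefixWeight c f = 1 := by
  have huniv : topoOrders par 0 ∅ = univ :=
    eq_univ_of_forall fun f => mem_topoOrders.mpr
      ⟨Function.injective_of_subsingleton f, by simp, fun i => i.elim0⟩
  simp [huniv, prefixWeight]

theorem sum_topoOrders_eq_prod_inv_sum_subtree [LinearOrder 𝕜] [IsStrictOrderedRing 𝕜]
    (hacyclic : ∀ k, ¬ TransGen (IsChild par) k k) {c : α → 𝕜} (hc : ∀ j, 0 < c j)
    (hs : ChildClosed par s) (hn : #s = n) :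
    ∑ f ∈ topoOrders par n s, prefixWeight c f = ∏ k ∈ s, (∑ j ∈ subtree par k, c j)⁻¹ := by
  induction n generalizing s with
  | zero =>
    rw [card_eq_zero.mp hn, sum_topoOrders_zero, prod_empty]
  | succ n ih =>
    have hsubtree : ∀ k, ∑ j ∈ subtree par k, c j ≠ 0 := fun k =>
      (sum_pos (fun j _ => hc j) ⟨k, mem_filter.mpr ⟨mem_univ k, .refl⟩⟩).ne'
    have htotal : ∑ j ∈ s, c j ≠ 0 :=
      (sum_pos (fun j _ => hc j) (card_pos.mp (hn ▸ n.succ_pos))).ne'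
    have herase : ∀ r ∈ roots par s, ∏ k ∈ s.erase r, (∑ j ∈ subtree par k, c j)⁻¹ =
        (∏ k ∈ s, (∑ j ∈ subtree par k, c j)⁻¹) * ∑ j ∈ subtree par r, c j := by
      intro r hr
      rw [← prod_erase_mul s _ (mem_roots.mp hr).1, mul_assoc, inv_mul_cancel₀ (hsubtree r),
        mul_one]
    rw [sum_topoOrders_succ]
    calc (∑ j ∈ s, c j)⁻¹ *
          ∑ r ∈ roots par s, ∑ g ∈ topoOrders par n (s.erase r), prefixWeight c g
        = (∑ j ∈ s, c j)⁻¹ * ∑ r ∈ roots par s, (∏ k ∈ s, (∑ j ∈ subtree par k, c j)⁻¹) *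
            ∑ j ∈ subtree par r, c j := by
          refine congrArg _ (sum_congr rfl fun r hr => ?_)
          rw [ih (hs.erase_root hr) (by rw [card_erase_of_mem (mem_roots.mp hr).1, hn]; rfl),
            herase r hr]
      _ = ∏ k ∈ s, (∑ j ∈ subtree par k, c j)⁻¹ := by
          rw [← mul_sum, sum_roots_sum_subtree hacyclic hs, mul_left_comm,
            inv_mul_cancel₀ htotal, mul_one]

end Orders

theorem sum_perm_topological_eq_sum_topoOrders {K : ℕ} (par : Fin K → Option (Fin K))
    {M : Type*} [AddCommMonoid M] (F : (Fin K → Fin K) → M) :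
    ∑ σ ∈ univ.filter
        (fun σ : Equiv.Perm (Fin K) => ∀ a b, par a = some b → σ.symm a < σ.symm b), F σ =
      ∑ f ∈ topoOrders par K univ, F f := by
  refine sum_bij (fun σ _ => ⇑σ) (fun σ hσ => ?_) (fun σ _ τ _ h => DFunLike.coe_injective h)
    (fun f hf => ?_) (fun _ _ => rfl)
  · refine mem_topoOrders.mpr ⟨σ.injective, by simp, fun i j h => ?_⟩
    simpa using (mem_filter.mp hσ).2 _ _ h
  · obtain ⟨hinj, -, htopo⟩ := mem_topoOrders.mp hf
    let σ := Equiv.ofBijective f (Finite.injective_iff_bijective.mp hinj)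
    refine ⟨σ, mem_filter.mpr ⟨mem_univ _, fun a b hab => htopo _ _ ?_⟩, rfl⟩
    simpa [σ, Equiv.ofBijective_apply_symm_apply] using hab

end ForestPartialFraction

open scoped Classical in
/-- Forest-indexed generalization of the permutation partial-fraction identity
(Lemma 4.21 of the paper).  The rooted forest on vertices `Fin K` is encoded by a
parent function `par` (each vertex has at most one parent; `par a = some b` means
there is a directed edge from the parent `b` to the child `a`), assumed acyclic.
The subtree `V k` rooted at `k` consists of all vertices from which `k` is reachable
by repeatedly taking parents.  A permutation `σ` (listing the vertices as
`σ 0, σ 1, …`) is a topological order iff every child appears before its parent,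
equivalently every vertex appears after all vertices of the subtree rooted at it.
Then for positive reals `c j`:
`∑_{σ topological} ∏_{k=1}^K (∑_{j=1}^k c_{σ(j)})⁻¹ = ∏_k (∑_{j ∈ V_k} c_j)⁻¹`. -/
theorem forest_partial_fraction_identity (K : ℕ) (par : Fin K → Option (Fin K))
    (hacyclic : ∀ k : Fin K, ¬ Relation.TransGen (fun a b => par a = some b) k k)
    (c : Fin K → ℝ) (hc : ∀ j, 0 < c j) :
    ∑ σ ∈ Finset.univ.filter
        (fun σ : Equiv.Perm (Fin K) =>
          ∀ a b : Fin K, par a = some b → σ.symm a < σ.symm b),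
      ∏ k : Fin K, (∑ j ∈ Finset.Iic k, c (σ j))⁻¹
      = ∏ k : Fin K,
          (∑ j ∈ Finset.univ.filter
              (fun j : Fin K => Relation.ReflTransGen (fun a b => par a = some b) j k),
            c j)⁻¹ := by
  open ForestPartialFraction in
  calc _ = ∑ f ∈ topoOrders par K univ, prefixWeight c f :=
        sum_perm_topological_eq_sum_topoOrders par (prefixWeight c)
    _ = _ := sum_topoOrders_eq_prod_inv_sum_subtree hacyclic hc (fun a _ _ _ => mem_univ a)
        (card_fin K)
end

section
/- For every natural number $k \ge 1$ and real $p$ with $0 < p < 1$: $\frac{1}{k!}\left(\frac{p}{1-p}\right)^k \sum_{j=0}^{k} \left\langle {k \atop j} \right\rangle p^{-j} = \sum_{\mathbf{m} \in R(k)} \binom{m_1+\cdots+m_k}{m_1,\dots,m_k} (1-p)^{-|\mathbf{m}|} \prod_{j=1}^{k} \frac{p^{m_j}}{(j!)^{m_j}}$, where $R(k) = \{\mathbf{m} \in \mathbb{N}^k : 1\cdot m_1 + 2\cdot m_2 + \cdots + k\cdot m_k = k\}$, $|\mathbf{m}| = m_1 + \cdots + m_k$, and $\left\langle {k \atop j}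 \right\rangle$ denotes the Eulerian number counting permutations of $\{1,\dots,k\}$ with exactly $j$ ascents. -/
/-!
Put `x = p / (1 - p)`. Since `x * p⁻¹ = 1 + x`, the left side is
`(1 / k!) ∑_σ x ^ (k - asc σ) * (1 + x) ^ asc σ` and the right side is a polynomial in `x`;
after multiplying by `k!`, both coefficients of `x ^ n` count the surjections `[k] → [n]`.

On the right, a surjection is determined by its fibre sizes, a composition `a` of `k` into `n`
positive parts, and there are `multinomial a` of them; the compositions that rearrange the
partition with multiplicities `m` number `multinomial m` and each has
`multinomial a = k! / ∏ j, (j!) ^ m_j`.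

On the left, expanding `(1 + x) ^ asc σ` counts pairs `(σ, S)` where `S` is a set of `k - n`
ascents of `σ`. Cutting the word `σ` at the `n - 1` positions outside `S` leaves `n` increasing
blocks, and labelling each letter by the index of its block gives a surjection `g`. Conversely
`σ` is recovered from `g` as its stable sort, and `S` as the positions where the sorted labels
stay constant.
-/

open Finset

/-- The Eulerian number `⟨k, i⟩`: the number of permutations of `{1, …, k}`
with exactly `i` ascents (positions where an element is greater than the
previous element). -/
def eulerian (k i : ℕ) : ℕ :=
  (Finset.univ.filter fun σ : Equiv.Perm (Fin k) =>
    (Finset.univ.filter fun q : Fin k × Fin k =>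
      (q.2 : ℕ) = (q.1 : ℕ) + 1 ∧ σ q.1 < σ q.2).card = i).card

theorem card_fibers_eq_multinomial {α β : Type*} [Fintype α] [DecidableEq α] [Fintype β]
    [DecidableEq β] (b : β → ℕ) (hb : ∑ y, b y = Fintype.card α) :
    #{f : α → β | ∀ y, #{x | f x = y} = b y} = Nat.multinomial univ b := by
  let d : β →₀ ℕ := Finsupp.equivFunOnFinite.symm b
  have hX : ∀ f : α → β, ∏ x, (MvPolynomial.X (f x) : MvPolynomial β ℕ)
      = MvPolynomial.monomial (∑ x, Finsupp.single (f x) 1) 1 := by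
    intro f
    rw [MvPolynomial.monomial_sum_one]
    rfl
  have hfib : ∀ f : α → β,
      (∑ x, Finsupp.single (f x) 1 = d) ↔ ∀ y, #{x | f x = y} = b y := by
    intro f
    simp [Finsupp.ext_iff, d, Finsupp.finsetSum_apply, Finsupp.single_apply]
  calc #{f : α → β | ∀ y, #{x | f x = y} = b y}
      = MvPolynomial.coeff d (∏ _x : α, ∑ y, (MvPolynomial.X y : MvPolynomial β ℕ)) := by
        rw [Fintype.prod_sum, MvPolynomial.coeff_sum]
        simp only [hX, MvPolynomial.coeff_monomial, hfib]
        rw [Finset.sum_boole, Nat.cast_id]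
    _ = Nat.multinomial univ b := by
        rw [prod_const, card_univ, MvPolynomial.coeff_sum_X_pow_of_fintype,
          Finsupp.sum_fintype _ _ (fun _ => rfl)]
        simp [d, hb, Finsupp.multinomial_eq_of_support_subset (subset_univ _)]

/-- The paper's `R(k)`: `m j` is the multiplicity of the part `j + 1` in a partition of `k`.
The bound `m j ≤ k` is automatic and only serves to make the set finite. -/
def multiplicityVectors (k : ℕ) : Finset (Fin k → ℕ) :=
  {m ∈ Fintype.piFinset fun _ : Fin k => range (k + 1) | ∑ j : Fin k, ((j : ℕ) + 1) * m j = k}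

theorem sum_le_sum_succ_mul {k : ℕ} (m : Fin k → ℕ) :
    ∑ j, m j ≤ ∑ j : Fin k, ((j : ℕ) + 1) * m j :=
  sum_le_sum fun j _ => Nat.le_mul_of_pos_left (m j) j.succ_pos

theorem sum_le_of_mem_multiplicityVectors {k : ℕ} {m : Fin k → ℕ}
    (hm : m ∈ multiplicityVectors k) : ∑ j, m j ≤ k :=
  (sum_le_sum_succ_mul m).trans_eq (mem_filter.1 hm).2

def compositions (ι : Type*) [Fintype ι] [DecidableEq ι] (k : ℕ) : Finset (ι → ℕ) :=
  {a ∈ piAntidiag univ k | ∀ i, 0 < a i}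

section Compositions

variable {ι : Type*} [Fintype ι]

def profile (k : ℕ) (a : ι → ℕ) : Fin k → ℕ :=
  fun j => #{i | a i = j + 1}

@[to_additive]
theorem prod_eq_prod_pow_profile {M : Type*} [CommMonoid M] {k : ℕ} {a : ι → ℕ}
    (hpos : ∀ i, 0 < a i) (hle : ∀ i, a i ≤ k) (F : ℕ → M) :
    ∏ i, F (a i) = ∏ j : Fin k, F (j + 1) ^ profile k a j := by
  have hmaps : ∀ i ∈ (univ : Finset ι), a i - 1 ∈ range k := fun i _ => by
    have := hpos i; have := hle i; simp only [mem_range]; omega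
  rw [← prod_fiberwise_of_maps_to hmaps, ← Fin.prod_univ_eq_prod_range]
  refine prod_congr rfl fun j _ => ?_
  have hfiber : (univ.filter fun i => a i - 1 = j) = univ.filter fun i => a i = j + 1 :=
    filter_congr fun i _ => by have := hpos i; omega
  rw [hfiber, prod_congr rfl fun i hi => congrArg F (mem_filter.1 hi).2, prod_const]
  rfl

variable [DecidableEq ι]

theorem mem_compositions {k : ℕ} {a : ι → ℕ} :
    a ∈ compositions ι k ↔ ∑ i, a i = k ∧ ∀ i, 0 < a i := by
  simp [compositions, mem_piAntidiag]

theorem le_of_mem_compositions {k : ℕ} {a : ι → ℕ} (ha : a ∈ compositions ι k) (i : ι) :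
    a i ≤ k :=
  (mem_compositions.1 ha).1 ▸ single_le_sum (fun _ _ => Nat.zero_le _) (mem_univ i)

theorem card_surjective_eq_sum_multinomial {α : Type*} [Fintype α] [DecidableEq α] :
    #{g : α → ι | Function.Surjective g}
      = ∑ b ∈ compositions ι (Fintype.card α), Nat.multinomial univ b := by
  have hmaps : ∀ g ∈ ({g : α → ι | Function.Surjective g} : Finset _),
      (fun y => #{x | g x = y}) ∈ compositions ι (Fintype.card α) := by
    intro g hg
    refine mem_compositions.2 ⟨?_, fun y => ?_⟩
    · exact (card_eq_sum_card_fiberwise fun x _ => mem_univ (g x)).symm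
    · obtain ⟨x, rfl⟩ := (mem_filter.1 hg).2 y
      exact card_pos.2 ⟨x, by simp⟩
  rw [card_eq_sum_card_fiberwise hmaps]
  refine sum_congr rfl fun b hb => ?_
  obtain ⟨hsum, hpos⟩ := mem_compositions.1 hb
  rw [← card_fibers_eq_multinomial b hsum]
  congr 1
  ext g
  simp only [mem_filter, mem_univ, true_and, funext_iff]
  refine ⟨fun h => h.2, fun h => ⟨fun y => ?_, h⟩⟩
  obtain ⟨x, hx⟩ := card_pos.1 ((h y).symm ▸ hpos y)
  exact ⟨x, (mem_filter.1 hx).2⟩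

theorem profile_mem_multiplicityVectors {k : ℕ} {a : ι → ℕ} (ha : a ∈ compositions ι k) :
    profile k a ∈ {m ∈ multiplicityVectors k | ∑ j, m j = Fintype.card ι} := by
  have hpos := (mem_compositions.1 ha).2
  have hle := le_of_mem_compositions ha
  have hcard : ∑ j, profile k a j = Fintype.card ι := by
    simpa using (sum_eq_sum_nsmul_profile (M := ℕ) hpos hle fun _ => 1).symm
  have hweight : ∑ j : Fin k, ((j : ℕ) + 1) * profile k a j = k := by
    simpa [(mem_compositions.1 ha).1, mul_comm] using (sum_eq_sum_nsmul_profile hpos hle id).symm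
  have hcard_le : Fintype.card ι ≤ k := by
    simpa only [hcard, hweight] using sum_le_sum_succ_mul (profile k a)
  simp only [multiplicityVectors, mem_filter, Fintype.mem_piFinset, mem_range]
  exact ⟨⟨fun j => Nat.lt_succ_of_le ((card_filter_le _ _).trans hcard_le), hweight⟩, hcard⟩

theorem card_filter_profile_eq {k : ℕ} {m : Fin k → ℕ} (hm : m ∈ multiplicityVectors k)
    (hcard : ∑ j, m j = Fintype.card ι) :
    #{a ∈ compositions ι k | profile k a = m} = Nat.multinomial univ m := by
  have hprofile : ∀ f : ι → Fin k,
      profile k (fun i => (f i : ℕ) + 1) = fun j => #{i | f i = j} := fun f => by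
    funext j
    simp [profile, Fin.ext_iff]
  refine (Eq.symm ?_).trans (card_fibers_eq_multinomial m hcard)
  refine card_bij (fun f _ i => (f i : ℕ) + 1) (fun f hf => ?_) (fun f _ g _ hfg => ?_)
    (fun a ha => ?_)
  · have hf : ∀ j, #{i | f i = j} = m j := by simpa using hf
    have hsum := sum_eq_sum_nsmul_profile (k := k) (a := fun i => (f i : ℕ) + 1)
      (fun i => Nat.succ_pos _) (fun i => (f i).is_lt) id
    simp only [hprofile, hf, id, smul_eq_mul] at hsum
    refine mem_filter.2 ⟨mem_compositions.2 ⟨?_, fun i => Nat.succ_pos _⟩,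
      (hprofile f).trans (funext hf)⟩
    exact hsum.trans ((sum_congr rfl fun j _ => mul_comm _ _).trans (mem_filter.1 hm).2)
  · funext i
    exact Fin.ext (by simpa using congrFun hfg i)
  · simp only [mem_filter] at ha
    obtain ⟨ha, rfl⟩ := ha
    have hpos := (mem_compositions.1 ha).2
    have hle := le_of_mem_compositions ha
    set f : ι → Fin k := fun i => ⟨a i - 1, by have := hpos i; have := hle i; omega⟩
    have hfa : (fun i => (f i : ℕ) + 1) = a := funext fun i => by
      have := hpos i
      simp only [f]
      omega
    refine ⟨f, ?_, hfa⟩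
    rw [← hfa, hprofile f]
    simp

theorem multinomial_mul_prod_factorial_pow_profile {k : ℕ} {a : ι → ℕ}
    (ha : a ∈ compositions ι k) :
    Nat.multinomial univ a * ∏ j : Fin k, (j + 1 : ℕ).factorial ^ profile k a j
      = k.factorial := by
  obtain ⟨hsum, hpos⟩ := mem_compositions.1 ha
  rw [← prod_eq_prod_pow_profile hpos (le_of_mem_compositions ha), mul_comm,
    Nat.multinomial_spec, hsum]

theorem sum_multinomial_compositions (k : ℕ) :
    ∑ a ∈ compositions ι k, (Nat.multinomial univ a : ℝ)
      = ∑ m ∈ multiplicityVectors k with ∑ j, m j = Fintype.card ι,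
          (Nat.multinomial univ m : ℝ)
            * (k.factorial / ∏ j : Fin k, ((j + 1 : ℕ).factorial : ℝ) ^ m j) := by
  rw [← sum_fiberwise_of_maps_to fun a ha => profile_mem_multiplicityVectors ha]
  refine sum_congr rfl fun m hm => ?_
  obtain ⟨hm, hcard⟩ := mem_filter.1 hm
  rw [← card_filter_profile_eq hm hcard, ← nsmul_eq_mul, ← sum_const]
  refine sum_congr rfl fun a ha => ?_
  simp only [mem_filter] at ha
  obtain ⟨ha, rfl⟩ := ha
  rw [eq_div_iff (by positivity)]
  exact_mod_cast multinomial_mul_prod_factorial_pow_profile ha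

end Compositions

theorem sum_card_surjective_mul_pow (k : ℕ) (x : ℝ) :
    ∑ n ∈ range (k + 1), (#{g : Fin k → Fin n | Function.Surjective g} : ℝ) * x ^ n
      = ∑ m ∈ multiplicityVectors k, (Nat.multinomial univ m : ℝ)
          * (k.factorial / ∏ j : Fin k, ((j + 1 : ℕ).factorial : ℝ) ^ m j)
          * x ^ ∑ j, m j := by
  have hmaps : ∀ m ∈ multiplicityVectors k, ∑ j, m j ∈ range (k + 1) :=
    fun m hm => mem_range.2 (Nat.lt_succ_of_le (sum_le_of_mem_multiplicityVectors hm))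
  rw [← sum_fiberwise_of_maps_to hmaps]
  refine sum_congr rfl fun n _ => ?_
  rw [card_surjective_eq_sum_multinomial, Fintype.card_fin, Nat.cast_sum,
    sum_multinomial_compositions, Fintype.card_fin, sum_mul]
  exact sum_congr rfl fun m hm => by rw [(mem_filter.1 hm).2]

section BlockIndex

variable {K N : ℕ}

def ascents {α : Type*} [LinearOrder α] (f : Fin (K + 1) → α) : Finset (Fin K) :=
  {i | f i.castSucc < f i.succ}

theorem mem_ascents {α : Type*} [LinearOrder α] {f : Fin (K + 1) → α} {i : Fin K} :
    i ∈ ascents f ↔ f i.castSucc < f i.succ := by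
  simp [ascents]

def blockIndex (T : Finset (Fin K)) (t : Fin (K + 1)) : ℕ :=
  #{i ∈ T | i.castSucc < t}

variable {T : Finset (Fin K)}

theorem blockIndex_zero : blockIndex T 0 = 0 := by
  simp [blockIndex]

theorem blockIndex_succ (i : Fin K) :
    blockIndex T i.succ = blockIndex T i.castSucc + if i ∈ T then 1 else 0 := by
  simp only [blockIndex, card_filter, Fin.castSucc_lt_succ_iff, Fin.castSucc_lt_castSucc_iff]
  rw [← sum_ite_eq' T i fun _ => 1, ← sum_add_distrib]
  refine sum_congr rfl fun j _ => ?_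
  split_ifs <;> omega

theorem blockIndex_mono : Monotone (blockIndex T) := fun _ _ hst =>
  card_le_card (monotone_filter_right _ fun _ _ h => h.trans_le hst)

theorem blockIndex_le (t : Fin (K + 1)) : blockIndex T t ≤ #T :=
  card_filter_le _ _

theorem blockIndex_last : blockIndex T (Fin.last K) = #T := by
  rw [blockIndex, filter_true_of_mem fun i _ => Fin.castSucc_lt_last i]

theorem blockIndex_castSucc_eq_succ_iff {i : Fin K} :
    blockIndex T i.castSucc = blockIndex T i.succ ↔ i ∉ T := by
  rw [blockIndex_succ]
  split_ifs <;> simp_all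

theorem exists_blockIndex_eq {v : ℕ} (hv : v ≤ #T) : ∃ t, blockIndex T t = v := by
  suffices ∀ t, v ≤ blockIndex T t → ∃ s, blockIndex T s = v from
    this (Fin.last K) (blockIndex_last.symm ▸ hv)
  refine Fin.induction (fun hv => ⟨0, by rw [blockIndex_zero] at hv ⊢; omega⟩)
    fun i ih hv => ?_
  by_cases hlt : v ≤ blockIndex T i.castSucc
  · exact ih hlt
  · refine ⟨i.succ, ?_⟩
    rw [blockIndex_succ] at hv ⊢
    split_ifs at hv ⊢ <;> omega

end BlockIndex

section MonotoneSurjective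

variable {K N : ℕ} {h : Fin (K + 1) → Fin (N + 1)}

theorem val_succ_le_of_monotone_surjective (hm : Monotone h) (hs : Function.Surjective h)
    (i : Fin K) : (h i.succ : ℕ) ≤ h i.castSucc + 1 := by
  by_contra! hgap
  obtain ⟨t, ht⟩ := hs ⟨h i.castSucc + 1, by omega⟩
  rcases le_or_gt t i.castSucc with hti | hti
  · have := Fin.le_def.1 (ht ▸ hm hti)
    simp at this
  · have := Fin.le_def.1 (ht ▸ hm (Fin.castSucc_lt_iff_succ_le.1 hti))
    simp only at this
    omega

theorem val_eq_blockIndex_ascents (hm : Monotone h) (hs : Function.Surjective h)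
    (t : Fin (K + 1)) : (h t : ℕ) = blockIndex (ascents h) t := by
  induction t using Fin.induction with
  | zero =>
    obtain ⟨t, ht⟩ := hs 0
    have h0 : h 0 = 0 := Fin.le_zero_iff.1 (ht ▸ hm (Fin.zero_le t))
    rw [blockIndex_zero, h0, Fin.val_zero]
  | succ i ih =>
    have hle := Fin.le_def.1 (hm (Fin.castSucc_lt_succ (i := i)).le)
    have hstep := val_succ_le_of_monotone_surjective hm hs i
    rw [blockIndex_succ, ← ih]
    split_ifs with hasc <;> rw [mem_ascents, Fin.lt_def] at hasc <;> omega

theorem card_ascents_of_monotone_surjective (hm : Monotone h) (hs : Function.Surjective h) :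
    #(ascents h) = N := by
  obtain ⟨t, ht⟩ := hs (Fin.last N)
  have hlast : h (Fin.last K) = Fin.last N :=
    le_antisymm (Fin.le_last _) (ht ▸ hm (Fin.le_last t))
  rw [← blockIndex_last, ← val_eq_blockIndex_ascents hm hs, hlast, Fin.val_last]

end MonotoneSurjective

theorem le_of_blockIndex_eq {K : ℕ} {α : Type*} [LinearOrder α] {f : Fin (K + 1) → α}
    {S : Finset (Fin K)} (hS : S ⊆ ascents f) {s t : Fin (K + 1)} (hst : s ≤ t)
    (heq : blockIndex Sᶜ s = blockIndex Sᶜ t) : f s ≤ f t := by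
  induction t using Fin.induction generalizing s with
  | zero => rw [Fin.le_zero_iff.1 hst]
  | succ i ih =>
    rcases hst.lt_or_eq with hlt | rfl
    · have hs : s ≤ i.castSucc := Fin.le_castSucc_iff.2 hlt
      have h1 := blockIndex_mono (T := Sᶜ) hs
      have h2 := blockIndex_mono (T := Sᶜ) (Fin.castSucc_lt_succ (i := i)).le
      have hi : i ∈ S := by
        simpa using blockIndex_castSucc_eq_succ_iff.1 (by omega : blockIndex Sᶜ i.castSucc = _)
      exact (ih hs (by omega)).trans (mem_ascents.1 (hS hi)).le
    · exact le_rfl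

section Bijection

variable {K N : ℕ}

/-- `Fin.ofNat` reduces modulo `N + 1`, which is harmless when `#S = K - N`, since then
`blockIndex Sᶜ t ≤ N`. -/
def blockLabel (σ : Equiv.Perm (Fin (K + 1))) (S : Finset (Fin K)) : Fin (K + 1) → Fin (N + 1) :=
  fun t => Fin.ofNat (N + 1) (blockIndex Sᶜ (σ.symm t))

variable {σ : Equiv.Perm (Fin (K + 1))} {S : Finset (Fin K)}

theorem val_blockLabel_apply (hcard : #S = K - N) (t : Fin (K + 1)) :
    (blockLabel (N := N) σ S (σ t) : ℕ) = blockIndex Sᶜ t := by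
  have := blockIndex_le (T := Sᶜ) t
  rw [card_compl, Fintype.card_fin, hcard] at this
  simp only [blockLabel, Equiv.symm_apply_apply, Fin.val_ofNat]
  apply Nat.mod_eq_of_lt
  omega

theorem blockLabel_surjective (hN : N ≤ K) (hcard : #S = K - N) :
    Function.Surjective (blockLabel (N := N) σ S) := by
  intro v
  have hv : (v : ℕ) ≤ #Sᶜ := by
    rw [card_compl, Fintype.card_fin, hcard]
    omega
  obtain ⟨t, ht⟩ := exists_blockIndex_eq hv
  exact ⟨σ t, Fin.ext ((val_blockLabel_apply hcard t).trans ht)⟩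

theorem ascents_blockLabel_comp (hcard : #S = K - N) :
    ascents (blockLabel (N := N) σ S ∘ σ) = Sᶜ := by
  ext i
  rw [mem_ascents, Fin.lt_def, Function.comp_apply, Function.comp_apply,
    val_blockLabel_apply hcard, val_blockLabel_apply hcard, blockIndex_succ]
  split_ifs with hi <;> simpa using hi

theorem sort_blockLabel (hS : S ⊆ ascents σ) (hcard : #S = K - N) :
    Tuple.sort (blockLabel (N := N) σ S) = σ := by
  refine (Tuple.eq_sort_iff.2 ⟨fun s t hst => ?_, fun s t hst heq => ?_⟩).symm
  · simpa [Fin.le_def, val_blockLabel_apply hcard] using blockIndex_mono hst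
  · have heq' : blockIndex Sᶜ s = blockIndex Sᶜ t := by
      rw [← val_blockLabel_apply hcard, ← val_blockLabel_apply hcard, heq]
    exact (le_of_blockIndex_eq hS hst.le heq').lt_of_ne (σ.injective.ne hst.ne)

variable {g : Fin (K + 1) → Fin (N + 1)}

theorem compl_ascents_sort_subset_ascents :
    (ascents (g ∘ Tuple.sort g))ᶜ ⊆ ascents (Tuple.sort g) := by
  intro i hi
  rw [mem_compl, mem_ascents, not_lt] at hi
  have heq := le_antisymm (Tuple.monotone_sort g Fin.castSucc_lt_succ.le) hi
  exact mem_ascents.2 ((Tuple.eq_sort_iff.1 rfl).2 _ _ Fin.castSucc_lt_succ heq)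

theorem card_compl_ascents_sort (hg : Function.Surjective g) :
    #(ascents (g ∘ Tuple.sort g))ᶜ = K - N := by
  rw [card_compl, Fintype.card_fin,
    card_ascents_of_monotone_surjective (Tuple.monotone_sort g) (hg.comp (Equiv.surjective _))]

theorem blockLabel_sort (hg : Function.Surjective g) :
    blockLabel (Tuple.sort g) (ascents (g ∘ Tuple.sort g))ᶜ = g := by
  funext t
  obtain ⟨s, rfl⟩ := (Tuple.sort g).surjective t
  refine Fin.ext ?_
  rw [val_blockLabel_apply (card_compl_ascents_sort hg), compl_compl,
    ← val_eq_blockIndex_ascents (Tuple.monotone_sort g) (hg.comp (Equiv.surjective _))]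
  rfl

end Bijection

section Eulerian

variable {K N : ℕ}

theorem card_sigma_powersetCard_ascents (hN : N ≤ K) :
    #(univ.sigma fun σ : Equiv.Perm (Fin (K + 1)) => (ascents σ).powersetCard (K - N))
      = #{g : Fin (K + 1) → Fin (N + 1) | Function.Surjective g} := by
  refine card_bij' (fun x _ => blockLabel x.1 x.2)
    (fun g _ => ⟨Tuple.sort g, (ascents (g ∘ Tuple.sort g))ᶜ⟩)
    (fun x hx => ?_) (fun g hg => ?_) (fun x hx => ?_) (fun g hg => ?_)
  all_goals simp only [mem_sigma, mem_univ, true_and, mem_powersetCard, mem_filter] at *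
  · exact blockLabel_surjective hN hx.2
  · exact ⟨compl_ascents_sort_subset_ascents, card_compl_ascents_sort hg⟩
  · rw [sort_blockLabel hx.1 hx.2, ascents_blockLabel_comp hx.2, compl_compl]
  · exact blockLabel_sort hg

theorem sum_choose_card_ascents (hN : N ≤ K) :
    ∑ σ : Equiv.Perm (Fin (K + 1)), (#(ascents σ)).choose (K - N)
      = #{g : Fin (K + 1) → Fin (N + 1) | Function.Surjective g} := by
  simp only [← card_sigma_powersetCard_ascents hN, card_sigma, card_powersetCard]

theorem card_ascents_le (σ : Equiv.Perm (Fin (K + 1))) : #(ascents σ) ≤ K :=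
  (card_le_univ _).trans_eq (Fintype.card_fin K)

theorem eulerian_succ_eq_card (K j : ℕ) :
    eulerian (K + 1) j = #{σ : Equiv.Perm (Fin (K + 1)) | #(ascents σ) = j} := by
  refine congrArg card (filter_congr fun σ _ => ?_)
  suffices #(ascents σ)
      = #{q : Fin (K + 1) × Fin (K + 1) | (q.2 : ℕ) = q.1 + 1 ∧ σ q.1 < σ q.2} by
    rw [this]
  refine card_bij (fun i _ => (i.castSucc, i.succ)) (fun i hi => ?_) (fun i _ j _ hij => ?_)
    (fun q hq => ?_)
  · simpa using mem_ascents.1 hi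
  · exact Fin.castSucc_injective K (Prod.ext_iff.1 hij).1
  · simp only [mem_filter, mem_univ, true_and] at hq
    set i : Fin K := ⟨q.1, by omega⟩
    have hq1 : i.castSucc = q.1 := Fin.ext rfl
    have hq2 : i.succ = q.2 := Fin.ext (by simp [i, hq.1])
    exact ⟨i, mem_ascents.2 (hq1 ▸ hq2 ▸ hq.2), Prod.ext hq1 hq2⟩

theorem sum_range_eulerian_mul {R : Type*} [CommSemiring R] (F : ℕ → R) :
    ∑ j ∈ range (K + 2), (eulerian (K + 1) j : R) * F j
      = ∑ σ : Equiv.Perm (Fin (K + 1)), F #(ascents σ) := by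
  have hmaps : ∀ σ ∈ (univ : Finset (Equiv.Perm (Fin (K + 1)))),
      #(ascents σ) ∈ range (K + 2) :=
    fun σ _ => mem_range.2 (by have := card_ascents_le σ; omega)
  rw [← sum_fiberwise_of_maps_to hmaps]
  refine sum_congr rfl fun j _ => ?_
  rw [sum_congr rfl fun σ hσ => congrArg F (mem_filter.1 hσ).2, sum_const, eulerian_succ_eq_card,
    nsmul_eq_mul]

end Eulerian

theorem pow_sub_mul_one_add_pow {R : Type*} [CommSemiring R] (x : R) {a n : ℕ} (ha : a ≤ n) :
    x ^ (n - a) * (1 + x) ^ a = ∑ i ∈ range (n + 1), (a.choose i : R) * x ^ (n - i) := by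
  rw [add_pow, mul_sum, ← sum_range_add_sum_Ico _ (Nat.succ_le_succ ha),
    sum_eq_zero (s := Ico _ _) fun i hi => by
      rw [Nat.choose_eq_zero_of_lt (mem_Ico.1 hi).1, Nat.cast_zero, zero_mul], add_zero]
  refine sum_congr rfl fun i hi => ?_
  have hi : i ≤ a := Nat.lt_succ_iff.1 (mem_range.1 hi)
  rw [one_pow, one_mul, ← mul_assoc, ← pow_add, Nat.sub_add_sub_cancel ha hi, mul_comm]

theorem sum_pow_sub_card_ascents_mul_one_add_pow {R : Type*} [CommSemiring R] (K : ℕ) (x : R) :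
    ∑ σ : Equiv.Perm (Fin (K + 1)), x ^ (K + 1 - #(ascents σ)) * (1 + x) ^ #(ascents σ)
      = ∑ n ∈ range (K + 2),
          (#{g : Fin (K + 1) → Fin n | Function.Surjective g} : R) * x ^ n := by
  rw [sum_range_succ']
  simp only [univ_eq_empty, filter_empty, card_empty, Nat.cast_zero, zero_mul, add_zero]
  calc ∑ σ : Equiv.Perm (Fin (K + 1)), x ^ (K + 1 - #(ascents σ)) * (1 + x) ^ #(ascents σ)
      = ∑ σ : Equiv.Perm (Fin (K + 1)), ∑ i ∈ range (K + 1),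
          ((#(ascents σ)).choose i : R) * x ^ (K - i + 1) := by
        refine sum_congr rfl fun σ _ => ?_
        have ha := card_ascents_le σ
        rw [Nat.sub_add_comm ha, pow_succ, mul_right_comm, pow_sub_mul_one_add_pow x ha, sum_mul]
        simp only [mul_assoc, ← pow_succ]
    _ = ∑ N ∈ range (K + 1), (∑ σ : Equiv.Perm (Fin (K + 1)),
          (#(ascents σ)).choose (K - N) : ℕ) * x ^ (N + 1) := by
        rw [sum_comm, ← sum_range_reflect]
        refine sum_congr rfl fun N hN => ?_
        have hN : N ≤ K := Nat.lt_succ_iff.1 (mem_range.1 hN)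
        rw [Nat.add_sub_cancel, Nat.sub_sub_self hN, Nat.cast_sum, sum_mul]
    _ = _ := by
        refine sum_congr rfl fun N hN => ?_
        rw [sum_choose_card_ascents (Nat.lt_succ_iff.1 (mem_range.1 hN))]

/-- Lemma 6.3 of the paper: for `k ≥ 1` and `0 < p < 1`,
`(1/k!) (p/(1-p))^k ∑_{j=0}^k ⟨k,j⟩ p^{-j}
  = ∑_{m ∈ R(k)} (m_1+⋯+m_k choose m_1,…,m_k) (1-p)^{-|m|} ∏_{j=1}^k p^{m_j}/(j!)^{m_j}`,
where `R(k) = {m ∈ ℕ^k : 1·m_1 + 2·m_2 + ⋯ + k·m_k = k}`. -/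
theorem eulerian_partition_identity (k : ℕ) (hk : 1 ≤ k) (p : ℝ)
    (hp : 0 < p) (hp1 : p < 1) :
    (1 / (Nat.factorial k : ℝ)) * (p / (1 - p)) ^ k *
        ∑ j ∈ Finset.range (k + 1), (eulerian k j : ℝ) * p⁻¹ ^ j
      = ∑ m ∈ (Fintype.piFinset fun _ : Fin k => Finset.range (k + 1)).filter
            (fun m : Fin k → ℕ => ∑ j : Fin k, ((j : ℕ) + 1) * m j = k),
          (Nat.multinomial Finset.univ m : ℝ) * ((1 - p)⁻¹) ^ (∑ j : Fin k, m j) *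
            ∏ j : Fin k, p ^ (m j) / ((Nat.factorial ((j : ℕ) + 1) : ℝ)) ^ (m j) := by
  obtain ⟨K, rfl⟩ : ∃ K, k = K + 1 := ⟨k - 1, by omega⟩
  have hp0 : p ≠ 0 := hp.ne'
  have hq : 1 - p ≠ 0 := sub_ne_zero.2 hp1.ne'
  set x := p / (1 - p) with hx
  have hpow : ∀ a ≤ K + 1, x ^ (K + 1) * p⁻¹ ^ a = x ^ (K + 1 - a) * (1 + x) ^ a := by
    intro a ha
    rw [← pow_sub_mul_pow x ha, mul_assoc, ← mul_pow, hx]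
    congr 2
    field_simp
    ring
  rw [sum_range_eulerian_mul, mul_assoc, mul_sum,
    sum_congr rfl fun σ _ => hpow _ ((card_ascents_le σ).trans K.le_succ),
    sum_pow_sub_card_ascents_mul_one_add_pow, sum_card_surjective_mul_pow, mul_sum]
  refine sum_congr rfl fun m _ => ?_
  rw [prod_div_distrib, prod_pow_eq_pow_sum, hx, div_eq_mul_inv p, mul_pow]
  field_simp
end

section
/- Let $\mathcal{S}$ be a nonempty finite collection of nonempty subsets of $\{1,\dots,N\}$ (job types), $p : \mathcal{S} \to (0,\infty)$, $\mu : \{1,\dots,N\} \to (0,\infty)$, and define for nonempty $\mathcal{T} \subseteq \mathcal{S}$ the load ratio $r(\mathcal{T}) = \mu(\mathcal{T})/p(\mathcal{T})$ where $p(\mathcal{T}) = \sum_{S \in \mathcal{T}} p_S$ and $\mu(\mathcal{T}) = \sum_{n \in \bigcup_{S \in \mathcal{T}} S} \mu_n$. Let $\mathcal{CR}$ be the set of minimizers of $r$ over nonempty subsets of $\mathcal{S}$. If $\mathcal{T}_1, \mathcal{T}_2 \in \mathcal{CR}$ are distinct and $\mathcal{T}_1 \cap \mathcal{T}_2 \ne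 \emptyset$, then $\mathcal{T}_1 \cap \mathcal{T}_2 \in \mathcal{CR}$ and $\mathcal{T}_1 \cup \mathcal{T}_2 \in \mathcal{CR}$. -/
open Finset

/-- Aggregate service rate of all servers compatible with some job type in `T`. -/
def muAgg {N : ℕ} (μ : Fin N → ℝ) (T : Finset (Finset (Fin N))) : ℝ :=
  ∑ n ∈ T.sup id, μ n

/-- Aggregate arrival fraction of the job types in `T`. -/
def pAgg {N : ℕ} (p : Finset (Fin N) → ℝ) (T : Finset (Finset (Fin N))) : ℝ :=
  ∑ S ∈ T, p S

/-- `T` is a critical subset of job types: a nonempty subset of the collection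
`𝒮` of job types minimizing the load ratio `μ(T)/p(T)` over all nonempty
subsets of `𝒮`. -/
def IsCritical {N : ℕ} (𝒮 : Finset (Finset (Fin N))) (p : Finset (Fin N) → ℝ)
    (μ : Fin N → ℝ) (T : Finset (Finset (Fin N))) : Prop :=
  T ⊆ 𝒮 ∧ T.Nonempty ∧
    ∀ T' : Finset (Finset (Fin N)), T' ⊆ 𝒮 → T'.Nonempty →
      muAgg μ T / pAgg p T ≤ muAgg μ T' / pAgg p T'

/-- The collection of critical subsets is a lattice where intersections are
nonempty (proof of Lemma 3.8): if `T₁ ≠ T₂` are both minimizers of the load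
ratio `μ(T)/p(T)` and `T₁ ∩ T₂ ≠ ∅`, then `T₁ ∩ T₂` and `T₁ ∪ T₂` are also
minimizers. -/
theorem critical_lattice (N : ℕ) (𝒮 : Finset (Finset (Fin N))) (h𝒮 : 𝒮.Nonempty)
    (hS : ∀ S ∈ 𝒮, S.Nonempty) (p : Finset (Fin N) → ℝ)
    (hp : ∀ S ∈ 𝒮, 0 < p S) (μ : Fin N → ℝ) (hμ : ∀ n, 0 < μ n)
    (T₁ T₂ : Finset (Finset (Fin N)))
    (h₁ : IsCritical 𝒮 p μ T₁) (h₂ : IsCritical 𝒮 p μ T₂)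
    (hne : T₁ ≠ T₂) (hint : (T₁ ∩ T₂).Nonempty) :
    IsCritical 𝒮 p μ (T₁ ∩ T₂) ∧ IsCritical 𝒮 p μ (T₁ ∪ T₂) := by
  obtain ⟨hs1, hn1, hmin1⟩ := h₁
  obtain ⟨hs2, hn2, hmin2⟩ := h₂
  set r := muAgg μ T₁ / pAgg p T₁ with hr
  have ppos : ∀ T : Finset (Finset (Fin N)), T ⊆ 𝒮 → T.Nonempty → 0 < pAgg p T := by
    intro T hT hTn
    exact Finset.sum_pos (fun S hSd => hp S (hT hSd)) hTn
  have key : ∀ T : Finset (Finset (Fin N)), T ⊆ 𝒮 → T.Nonempty →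
      r * pAgg p T ≤ muAgg μ T := by
    intro T hT hTn
    have hle := hmin1 T hT hTn
    have hpT := ppos T hT hTn
    calc r * pAgg p T ≤ (muAgg μ T / pAgg p T) * pAgg p T :=
          mul_le_mul_of_nonneg_right hle hpT.le
      _ = muAgg μ T := div_mul_cancel₀ _ hpT.ne'
  have hp1 := ppos T₁ hs1 hn1
  have hp2 := ppos T₂ hs2 hn2
  have heq1 : muAgg μ T₁ = r * pAgg p T₁ := (div_mul_cancel₀ _ hp1.ne').symm
  have heq2 : muAgg μ T₂ = r * pAgg p T₂ := by
    have h12 := hmin1 T₂ hs2 hn2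
    have h21 := hmin2 T₁ hs1 hn1
    have hre : muAgg μ T₂ / pAgg p T₂ = r := le_antisymm h21 h12
    rw [← hre, div_mul_cancel₀ _ hp2.ne']
  have hsubU : T₁ ∪ T₂ ⊆ 𝒮 := Finset.union_subset hs1 hs2
  have hsubI : T₁ ∩ T₂ ⊆ 𝒮 := (Finset.inter_subset_left).trans hs1
  have hnU : (T₁ ∪ T₂).Nonempty := hn1.mono Finset.subset_union_left
  have hU := key _ hsubU hnU
  have hI := key _ hsubI hint
  -- submodularity of muAgg
  have hsup : (T₁ ∪ T₂).sup id = T₁.sup id ∪ T₂.sup id := Finset.sup_union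
  have hsupI : (T₁ ∩ T₂).sup id ⊆ T₁.sup id ∩ T₂.sup id :=
    le_inf (Finset.sup_mono Finset.inter_subset_left)
      (Finset.sup_mono Finset.inter_subset_right)
  have hsum : (∑ n ∈ T₁.sup id ∪ T₂.sup id, μ n) + ∑ n ∈ T₁.sup id ∩ T₂.sup id, μ n
      = muAgg μ T₁ + muAgg μ T₂ := Finset.sum_union_inter
  have hImono : muAgg μ (T₁ ∩ T₂) ≤ ∑ n ∈ T₁.sup id ∩ T₂.sup id, μ n :=
    Finset.sum_le_sum_of_subset_of_nonneg hsupI (fun n _ _ => (hμ n).le)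
  have hsubmod : muAgg μ (T₁ ∪ T₂) + muAgg μ (T₁ ∩ T₂) ≤ muAgg μ T₁ + muAgg μ T₂ := by
    have : muAgg μ (T₁ ∪ T₂) = ∑ n ∈ T₁.sup id ∪ T₂.sup id, μ n := by
      rw [muAgg, hsup]
    linarith
  have padd : pAgg p (T₁ ∪ T₂) + pAgg p (T₁ ∩ T₂) = pAgg p T₁ + pAgg p T₂ :=
    Finset.sum_union_inter
  have hrp : r * pAgg p (T₁ ∪ T₂) + r * pAgg p (T₁ ∩ T₂)
      = r * pAgg p T₁ + r * pAgg p T₂ := by rw [← mul_add, ← mul_add, padd]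
  have eI : muAgg μ (T₁ ∩ T₂) = r * pAgg p (T₁ ∩ T₂) := by linarith
  have eU : muAgg μ (T₁ ∪ T₂) = r * pAgg p (T₁ ∪ T₂) := by linarith
  have hpI := ppos _ hsubI hint
  have hpU := ppos _ hsubU hnU
  have rI : muAgg μ (T₁ ∩ T₂) / pAgg p (T₁ ∩ T₂) = r := by
    rw [eI, mul_div_assoc, div_self hpI.ne', mul_one]
  have rU : muAgg μ (T₁ ∪ T₂) / pAgg p (T₁ ∪ T₂) = r := by
    rw [eU, mul_div_assoc, div_self hpU.ne', mul_one]
  exact ⟨⟨hsubI, hint, fun T' hT' hT'n => rI ▸ hmin1 T' hT' hT'n⟩,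
    ⟨hsubU, hnU, fun T' hT' hT'n => rU ▸ hmin1 T' hT' hT'n⟩⟩
end

section
/- With the setup of critical subsets as above, where $\mathcal{CR}$ denotes the set of minimizers of $r(\mathcal{T}) = \mu(\mathcal{T})/p(\mathcal{T})$ and $N\lambda^* = \min_\mathcal{T} r(\mathcal{T})$: if $|\mathcal{CR}| > 1$, then there exist $\mathcal{T}, \mathcal{T}' \in \mathcal{CR}$ with $\mathcal{T} \subsetneq \mathcal{T}'$. -/
open Finset

/-- Lemma 3.8 of the paper: whenever the minimizer of the load ratio
`T ↦ μ(T)/p(T)` over nonempty subsets of the (finite) collection of job types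
is not unique, two of the minimizers are strictly nested; equivalently, the
CRP condition holds iff the depth of the critical subsets equals 1. -/
theorem critical_not_unique_nested (N : ℕ) (𝒮 : Finset (Finset (Fin N)))
    (h𝒮 : 𝒮.Nonempty) (hS : ∀ S ∈ 𝒮, S.Nonempty) (p : Finset (Fin N) → ℝ)
    (hp : ∀ S ∈ 𝒮, 0 < p S) (μ : Fin N → ℝ) (hμ : ∀ n, 0 < μ n)
    (hmany : ∃ T₁ T₂ : Finset (Finset (Fin N)),
      IsCritical 𝒮 p μ T₁ ∧ IsCritical 𝒮 p μ T₂ ∧ T₁ ≠ T₂) :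
    ∃ T T' : Finset (Finset (Fin N)),
      IsCritical 𝒮 p μ T ∧ IsCritical 𝒮 p μ T' ∧ T ⊂ T' := by
  obtain ⟨T₁, T₂, h₁, h₂, hne⟩ := hmany
  obtain ⟨hsub₁, hne₁, hmin₁⟩ := h₁
  obtain ⟨hsub₂, hne₂, hmin₂⟩ := h₂
  -- positivity of pAgg on nonempty subsets
  have ppos : ∀ T : Finset (Finset (Fin N)), T ⊆ 𝒮 → T.Nonempty → 0 < pAgg p T := by
    intro T hT hTne
    exact Finset.sum_pos (fun S hs => hp S (hT hs)) hTne
  by_cases h12 : T₁ ⊆ T₂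
  · exact ⟨T₁, T₂, ⟨hsub₁, hne₁, hmin₁⟩, ⟨hsub₂, hne₂, hmin₂⟩, ⟨h12, fun h => hne (Finset.Subset.antisymm h12 h)⟩⟩
  by_cases h21 : T₂ ⊆ T₁
  · exact ⟨T₂, T₁, ⟨hsub₂, hne₂, hmin₂⟩, ⟨hsub₁, hne₁, hmin₁⟩, ⟨h21, fun h => hne (Finset.Subset.antisymm h h21)⟩⟩
  -- the common minimal ratio
  set r : ℝ := muAgg μ T₁ / pAgg p T₁ with hr
  have hreq : muAgg μ T₂ / pAgg p T₂ = r :=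
    le_antisymm (hmin₂ T₁ hsub₁ hne₁) (hmin₁ T₂ hsub₂ hne₂)
  have hmu₁ : muAgg μ T₁ = r * pAgg p T₁ := by
    rw [hr, div_mul_cancel₀ _ (ppos T₁ hsub₁ hne₁).ne']
  have hmu₂ : muAgg μ T₂ = r * pAgg p T₂ := by
    rw [← hreq]
    field_simp [(ppos T₂ hsub₂ hne₂).ne']
  have hrnonneg : 0 ≤ r := by
    apply div_nonneg _ (ppos T₁ hsub₁ hne₁).le
    exact Finset.sum_nonneg (fun n _ => (hμ n).le)
  -- lower bound: μ(T) ≥ r p(T) for every nonempty T ⊆ 𝒮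
  have hlow : ∀ T : Finset (Finset (Fin N)), T ⊆ 𝒮 → T.Nonempty →
      r * pAgg p T ≤ muAgg μ T := by
    intro T hT hTne
    have := hmin₁ T hT hTne
    rw [div_le_div_iff₀ (ppos T₁ hsub₁ hne₁) (ppos T hT hTne), hmu₁] at this
    nlinarith [this, ppos T₁ hsub₁ hne₁]
  -- lower bound for the intersection (possibly empty)
  have hlowInter : r * pAgg p (T₁ ∩ T₂) ≤ muAgg μ (T₁ ∩ T₂) := by
    rcases (T₁ ∩ T₂).eq_empty_or_nonempty with h | h
    · simp [h, pAgg, muAgg]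
    · exact hlow _ (fun S hs => hsub₁ (Finset.mem_of_mem_inter_left hs)) h
  -- submodularity of muAgg
  have hsupU : (T₁ ∪ T₂).sup id = T₁.sup id ∪ T₂.sup id := by
    simp [Finset.sup_union]
  have hsupI : (T₁ ∩ T₂).sup id ⊆ T₁.sup id ∩ T₂.sup id := by
    intro n hn
    rw [Finset.mem_sup] at hn
    obtain ⟨S, hSm, hnS⟩ := hn
    simp only [Finset.mem_inter, Finset.mem_sup]
    exact ⟨⟨S, Finset.mem_of_mem_inter_left hSm, hnS⟩,
      ⟨S, Finset.mem_of_mem_inter_right hSm, hnS⟩⟩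
  have hsubmod : muAgg μ (T₁ ∪ T₂) + muAgg μ (T₁ ∩ T₂) ≤ muAgg μ T₁ + muAgg μ T₂ := by
    have h1 : muAgg μ (T₁ ∩ T₂) ≤ ∑ n ∈ T₁.sup id ∩ T₂.sup id, μ n :=
      Finset.sum_le_sum_of_subset_of_nonneg hsupI (fun n _ _ => (hμ n).le)
    have h2 : (∑ n ∈ T₁.sup id ∪ T₂.sup id, μ n) + ∑ n ∈ T₁.sup id ∩ T₂.sup id, μ n
        = muAgg μ T₁ + muAgg μ T₂ := Finset.sum_union_inter
    calc muAgg μ (T₁ ∪ T₂) + muAgg μ (T₁ ∩ T₂)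
        ≤ (∑ n ∈ T₁.sup id ∪ T₂.sup id, μ n) + ∑ n ∈ T₁.sup id ∩ T₂.sup id, μ n := by
          rw [muAgg, hsupU]; linarith
      _ = muAgg μ T₁ + muAgg μ T₂ := h2
  -- additivity of pAgg
  have hpadd : pAgg p (T₁ ∪ T₂) + pAgg p (T₁ ∩ T₂) = pAgg p T₁ + pAgg p T₂ :=
    Finset.sum_union_inter
  -- the union is critical
  have hUsub : T₁ ∪ T₂ ⊆ 𝒮 := Finset.union_subset hsub₁ hsub₂
  have hUne : (T₁ ∪ T₂).Nonempty := hne₁.mono Finset.subset_union_left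
  have hUp : 0 < pAgg p (T₁ ∪ T₂) := ppos _ hUsub hUne
  have hUle : muAgg μ (T₁ ∪ T₂) ≤ r * pAgg p (T₁ ∪ T₂) := by
    have : r * pAgg p (T₁ ∪ T₂) = r * pAgg p T₁ + r * pAgg p T₂ - r * pAgg p (T₁ ∩ T₂) := by
      rw [← mul_add, ← hpadd]; ring
    rw [this]
    linarith
  have hUcrit : IsCritical 𝒮 p μ (T₁ ∪ T₂) := by
    refine ⟨hUsub, hUne, fun T' hT' hT'ne => ?_⟩
    have h1 : muAgg μ (T₁ ∪ T₂) / pAgg p (T₁ ∪ T₂) ≤ r := by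
      rw [div_le_iff₀ hUp]
      linarith
    refine h1.trans ?_
    have := hlow T' hT' hT'ne
    rw [le_div_iff₀ (ppos T' hT' hT'ne)]
    linarith
  exact ⟨T₁, T₁ ∪ T₂, ⟨hsub₁, hne₁, hmin₁⟩, hUcrit,
    ⟨Finset.subset_union_left, fun h => h21 (Finset.subset_union_right.trans h)⟩⟩
end
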